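/- Let m ∈ ℕ with m ≥ 1, let Δ > 0 and ε > 0, and let ν = Lap(2Δ/ε) be the Laplace measure with scale 2Δ/ε. For scores s : Fin m → ℝ and an index i, let A_i(s) = {η ∈ ℝ^m : ∀ j ≠ i, s(i) + η(i) > s(j) + η(j)} be the event that candidate i wins Report-Noisy-Max. Then for all s, s' : Fin m → ℝ with |s(j) − s'(j)| ≤ Δ for every j, and every index i: ν^{⊗m}(A_i(s)) ≤ exp(ε) · ν^{⊗m}(A_i(s')). (Report-Noisy-Max with Laplace noise of scale 2Δ/ε satisfies ε-differential privacy.) -/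

import Mathlib

/-!
If candidate `i` wins under `s`, it still wins under `s'` once its noise is raised by `2Δ`,
so `A_i(s)` lies in the preimage of `A_i(s')` under translation by `2Δ • e_i`. Translating
`Lap(b)` by `c` multiplies its density pointwise by at most `exp (|c| / b)` (triangle
inequality), hence translating the product measure by `v` multiplies it by at most
`exp (∑ j, |v j| / b)`, which is `exp ε` for `v = 2Δ • e_i` and `b = 2Δ / ε`.
-/

open MeasureTheory

/-- The Laplace measure `Lap(b)` on `ℝ`, with density `x ↦ (1/(2b))·exp(−|x|/b)`
with respect to Lebesgue measure. -/
noncomputable def lapMeasure (b : ℝ) : Measure ℝ :=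
  volume.withDensity fun x => ENNReal.ofReal (1 / (2 * b) * Real.exp (-|x| / b))

open ENNReal
open scoped NNReal

namespace MeasureTheory.Measure

variable {ι : Type*} [Fintype ι] {α : ι → Type*} [∀ j, MeasurableSpace (α j)]

theorem pi_mono {μ ν : ∀ j, Measure (α j)} (h : ∀ j, μ j ≤ ν j) :
    Measure.pi μ ≤ Measure.pi ν := by
  refine Measure.le_iff.2 fun S hS => ?_
  rw [pi_def, pi_def, toMeasure_apply _ _ hS, toMeasure_apply _ _ hS]
  refine OuterMeasure.le_boundedBy.2 (fun t => (OuterMeasure.boundedBy_le t).trans ?_) S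
  exact Finset.prod_le_prod' fun j _ => Measure.le_iff'.1 (h j) _

theorem pi_smul (μ : ∀ j, Measure (α j)) [∀ j, SigmaFinite (μ j)] (c : ι → ℝ≥0) :
    Measure.pi (fun j => c j • μ j) = (∏ j, c j) • Measure.pi μ := by
  refine pi_eq fun t _ => ?_
  simp only [smul_apply, pi_pi, Finset.prod_mul_distrib, ENNReal.smul_def,
    ofNNReal_finsetProd, smul_eq_mul]

theorem pi_map_le_smul {μ : ∀ j, Measure (α j)} [∀ j, SigmaFinite (μ j)]
    {f : ∀ j, α j → α j} (hf : ∀ j, Measurable (f j)) {c : ι → ℝ≥0}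
    (h : ∀ j, (μ j).map (f j) ≤ c j • μ j) :
    (Measure.pi μ).map (fun x j => f j (x j)) ≤ (∏ j, c j) • Measure.pi μ := by
  have := fun j => sigmaFinite_of_le _ (h j)
  rw [pi_map_pi fun j => (hf j).aemeasurable, ← pi_smul]
  exact pi_mono h

theorem map_add_right_withDensity {G : Type*} [MeasurableSpace G] [AddGroup G] [MeasurableAdd G]
    (μ : Measure G) [μ.IsAddRightInvariant] (f : G → ℝ≥0∞) (c : G) :
    (μ.withDensity f).map (· + c) = μ.withDensity fun x => f (x - c) := by
  ext s hs
  rw [map_apply (measurable_add_const c) hs, withDensity_apply _ hs,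
    withDensity_apply _ (measurable_add_const c hs)]
  simpa only [add_sub_cancel_right] using
    (measurePreserving_add_right μ c).setLIntegral_comp_preimage_emb
      (measurableEmbedding_addRight c) (fun x => f (x - c)) s

end MeasureTheory.Measure

instance (b : ℝ) : SigmaFinite (lapMeasure b) :=
  SigmaFinite.withDensity_of_ne_top' fun _ => ofReal_ne_top

theorem lapMeasure_density_sub_le (b c x : ℝ) :
    ENNReal.ofReal (1 / (2 * b) * Real.exp (-|x - c| / b)) ≤
      ENNReal.ofReal (Real.exp (|c| / b)) *
        ENNReal.ofReal (1 / (2 * b) * Real.exp (-|x| / b)) := by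
  rcases le_or_gt b 0 with hb | hb
  -- for `b ≤ 0` the density is `0`, as `Lap(b)` is then the zero measure
  · have : 1 / (2 * b) ≤ 0 := by rw [one_div_nonpos]; linarith
    rw [ENNReal.ofReal_of_nonpos (mul_nonpos_of_nonpos_of_nonneg this (Real.exp_nonneg _))]
    exact zero_le
  rw [← ENNReal.ofReal_mul (Real.exp_nonneg _), mul_left_comm, ← Real.exp_add]
  gcongr
  rw [← add_div, div_le_div_iff_of_pos_right hb]
  linarith [abs_sub_abs_le_abs_sub x c]

theorem lapMeasure_map_add_le (b c : ℝ) :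
    (lapMeasure b).map (· + c) ≤ (Real.exp (|c| / b)).toNNReal • lapMeasure b := by
  rw [lapMeasure, Measure.map_add_right_withDensity]
  change _ ≤ ENNReal.ofReal (Real.exp (|c| / b)) • (volume.withDensity _ : Measure ℝ)
  rw [← withDensity_smul' _ _ ofReal_ne_top]
  exact withDensity_mono (.of_forall (lapMeasure_density_sub_le b c))

theorem pi_lapMeasure_map_add_le {ι : Type*} [Fintype ι] (b : ℝ) (v : ι → ℝ) :
    (Measure.pi fun _ : ι => lapMeasure b).map (· + v) ≤
      (Real.exp (∑ j, |v j| / b)).toNNReal • Measure.pi fun _ : ι => lapMeasure b := by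
  rw [Real.exp_sum, Real.toNNReal_prod_of_nonneg fun j _ => (Real.exp_nonneg _)]
  exact Measure.pi_map_le_smul (fun j => measurable_add_const (v j))
    fun j => lapMeasure_map_add_le b (v j)

theorem noisyMax_win_subset_preimage_add_single {ι : Type*} [DecidableEq ι] {s s' : ι → ℝ}
    {Δ : ℝ} (hsens : ∀ j, |s j - s' j| ≤ Δ) (i : ι) :
    {η : ι → ℝ | ∀ j, j ≠ i → s i + η i > s j + η j} ⊆
      (· + Pi.single i (2 * Δ)) ⁻¹' {η | ∀ j, j ≠ i → s' i + η i > s' j + η j} := by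
  intro η hη j hj
  have hi := abs_le.1 (hsens i)
  have hj' := abs_le.1 (hsens j)
  simp only [Pi.add_apply, Pi.single_eq_same, Pi.single_eq_of_ne hj, add_zero]
  linarith [hη j hj]

theorem report_noisy_max_laplace_dp_general (m : ℕ) (Δ ε : ℝ) (hΔ : 0 < Δ)
    (s s' : Fin m → ℝ) (hsens : ∀ j, |s j - s' j| ≤ Δ) (i : Fin m) :
    (Measure.pi fun _ : Fin m => lapMeasure (2 * Δ / ε))
        {η : Fin m → ℝ | ∀ j, j ≠ i → s i + η i > s j + η j} ≤
      ENNReal.ofReal (Real.exp ε) *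
        (Measure.pi fun _ : Fin m => lapMeasure (2 * Δ / ε))
          {η : Fin m → ℝ | ∀ j, j ≠ i → s' i + η i > s' j + η j} := by
  set μ := Measure.pi fun _ : Fin m => lapMeasure (2 * Δ / ε)
  set v : Fin m → ℝ := Pi.single i (2 * Δ)
  have hv : ∑ j, |v j| / (2 * Δ / ε) = ε := by
    rw [Finset.sum_eq_single i (fun j _ hj => by simp [v, Pi.single_eq_of_ne hj]) (by simp)]
    rw [show v i = 2 * Δ from Pi.single_eq_same i _, abs_of_pos (by positivity),
      div_div_cancel₀ (by positivity)]
  calc μ _ ≤ μ ((· + v) ⁻¹' _) :=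
        measure_mono (noisyMax_win_subset_preimage_add_single hsens i)
    _ = μ.map (· + v) _ := ((MeasurableEquiv.addRight v).map_apply _).symm
    _ ≤ ((Real.exp ε).toNNReal • μ) _ :=
        hv ▸ Measure.le_iff'.1 (pi_lapMeasure_map_add_le _ v) _
    _ = _ := rfl

/-- Report-Noisy-Max with i.i.d. Laplace noise of scale `2Δ/ε` satisfies `ε`-DP: for score
vectors `s, s'` with `|s(j) − s'(j)| ≤ Δ` for all `j`, the probability that candidate `i`
wins under `s` is at most `exp(ε)` times the probability that it wins under `s'`. -/
theorem report_noisy_max_laplace_dp (m : ℕ) (hm : 1 ≤ m) (Δ ε : ℝ) (hΔ : 0 < Δ) (hε : 0 < ε)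
    (s s' : Fin m → ℝ) (hsens : ∀ j, |s j - s' j| ≤ Δ) (i : Fin m) :
    (Measure.pi fun _ : Fin m => lapMeasure (2 * Δ / ε))
        {η : Fin m → ℝ | ∀ j, j ≠ i → s i + η i > s j + η j} ≤
      ENNReal.ofReal (Real.exp ε) *
        (Measure.pi fun _ : Fin m => lapMeasure (2 * Δ / ε))
          {η : Fin m → ℝ | ∀ j, j ≠ i → s' i + η i > s' j + η j} :=
  report_noisy_max_laplace_dp_general m Δ ε hΔ s s' hsens i
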